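/- Let s be a Turing degree, and let M be an s-computable structure that is s-computably cofinally ultrahomogeneous. If the Turing degree of EmbedInfo(M) is ≤_T s, then the canonical computable age 𝕂[M] has CcoAP(s). -/

import Mathlib

/- Self-contained framework for computable ages and cofinal Fraïssé limits. -/

namespace CFL

open Classical

/-! ### Oracle computability -/

/-- The characteristic partial function of a set of naturals. -/
noncomputable def chi (A : Set ℕ) : ℕ →. ℕ :=
  fun n => Part.some (if n ∈ A then 1 else 0)

/-- Codes for oracle partial recursive functions. -/
inductive OCode : Type
  | zero : OCode
  | succ : OCode
  | left : OCode
  | right : OCode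
  | oracle : OCode
  | pair : OCode → OCode → OCode
  | comp : OCode → OCode → OCode
  | prec : OCode → OCode → OCode
  | rfind' : OCode → OCode

/-- Evaluation of an oracle code relative to an oracle `O`. -/
def OCode.eval (O : ℕ →. ℕ) : OCode → ℕ →. ℕ
  | OCode.zero => pure 0
  | OCode.succ => Nat.succ
  | OCode.left => ↑fun n : ℕ => n.unpair.1
  | OCode.right => ↑fun n : ℕ => n.unpair.2
  | OCode.oracle => O
  | OCode.pair cf cg => fun n => Nat.pair <$> OCode.eval O cf n <*> OCode.eval O cg n
  | OCode.comp cf cg => fun n => OCode.eval O cg n >>= OCode.eval O cf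
  | OCode.prec cf cg =>
    Nat.unpaired fun a n =>
      n.rec (OCode.eval O cf a) fun y IH => do
        let i ← IH
        OCode.eval O cg (Nat.pair a (Nat.pair y i))
  | OCode.rfind' cf =>
    Nat.unpaired fun a m =>
      (Nat.rfind fun n => (fun m => m = 0) <$> OCode.eval O cf (Nat.pair a (n + m))).map
        (· + m)

/-- A numerical code of an `OCode`. -/
def OCode.encodeCode : OCode → ℕ
  | OCode.zero => 0
  | OCode.succ => 1
  | OCode.left => 2
  | OCode.right => 3
  | OCode.oracle => 4
  | OCode.pair cf cg => 4 * Nat.pair cf.encodeCode cg.encodeCode + 5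
  | OCode.comp cf cg => 4 * Nat.pair cf.encodeCode cg.encodeCode + 6
  | OCode.prec cf cg => 4 * Nat.pair cf.encodeCode cg.encodeCode + 7
  | OCode.rfind' cf => 4 * cf.encodeCode + 8

/-- `f` is a partial function recursive in the oracle set `O`. -/
def RecFunIn (O : Set ℕ) (f : ℕ →. ℕ) : Prop :=
  ∃ c : OCode, OCode.eval (chi O) c = f

/-- The code `c` computes the total function `f` relative to the oracle set `O`. -/
def ComputesIn (O : Set ℕ) (c : OCode) (f : ℕ → ℕ) : Prop :=
  ∀ n, OCode.eval (chi O) c n = Part.some (f n)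

/-- `f` is a total function computable in the oracle set `O`. -/
def TotalComputableIn (O : Set ℕ) (f : ℕ → ℕ) : Prop :=
  ∃ c : OCode, ComputesIn O c f

/-- The set `A` is computable in the oracle set `O`. -/
def SetRecIn (O A : Set ℕ) : Prop := RecFunIn O (chi A)

/-- Turing reducibility (on sets of naturals, regarded as representatives of
Turing degrees). -/
def TuringLE (A B : Set ℕ) : Prop := SetRecIn B A

/-- The set `A` is computably enumerable in the oracle set `O`. -/
def CEIn (O A : Set ℕ) : Prop :=
  ∃ c : OCode, ∀ n, n ∈ A ↔ (OCode.eval (chi O) c n).Dom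

/-- The Turing jump of a set of naturals. -/
def jump (O : Set ℕ) : Set ℕ :=
  { e | ∃ c : OCode, c.encodeCode = (Nat.unpair e).1 ∧
      (OCode.eval (chi O) c (Nat.unpair e).2).Dom }

/-- `0'`, the jump of the least degree. -/
def zeroJump : Set ℕ := jump ∅

/-- `0''`. -/
def zeroJump2 : Set ℕ := jump zeroJump

/-- `0'''`. -/
def zeroJump3 : Set ℕ := jump zeroJump2

/-! ### Languages and structures -/

/-- A (coded) first-order language: `relArity r = some k` means that `r` is the code of a
relation symbol of arity `k`, and similarly for function symbols. -/
structure Lang where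
  relArity : ℕ → Option ℕ
  funArity : ℕ → Option ℕ

/-- The language is computably represented. -/
def Lang.ComputableRep (L : Lang) : Prop :=
  TotalComputableIn ∅ (fun r => Encodable.encode (L.relArity r)) ∧
  TotalComputableIn ∅ (fun f => Encodable.encode (L.funArity f))

/-- A finite relational language. -/
def Lang.FiniteRelational (L : Lang) : Prop :=
  (∀ f, L.funArity f = none) ∧ { r | (L.relArity r).isSome = true }.Finite

/-- A finite language. -/
def Lang.FiniteLang (L : Lang) : Prop :=
  { r | (L.relArity r).isSome = true }.Finite ∧
  { f | (L.funArity f).isSome = true }.Finite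

/-- An `L`-structure with underlying set a set of naturals. -/
structure Str (L : Lang) where
  dom : Set ℕ
  rel : ℕ → List ℕ → Prop
  fn : ℕ → List ℕ → ℕ
  rel_valid : ∀ r as, rel r as → L.relArity r = some as.length ∧ ∀ x ∈ as, x ∈ dom
  fn_mem : ∀ f as, L.funArity f = some as.length → (∀ x ∈ as, x ∈ dom) → fn f as ∈ dom

variable {L : Lang}

/-- The (finite) tuple `as` lies in the structure `A`. -/
def TupleIn (A : Str L) (as : List ℕ) : Prop := ∀ x ∈ as, x ∈ A.dom

/-- Membership in the substructure of `A` generated by the tuple `s`. -/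
inductive InClosure (A : Str L) (s : List ℕ) : ℕ → Prop
  | base {x : ℕ} : x ∈ s → x ∈ A.dom → InClosure A s x
  | fn (f : ℕ) (as : List ℕ) : L.funArity f = some as.length →
      (∀ x ∈ as, InClosure A s x) → InClosure A s (A.fn f as)

theorem InClosure.mem_dom {A : Str L} {s : List ℕ} {x : ℕ}
    (h : InClosure A s x) : x ∈ A.dom := by
  induction h with
  | base _ hx => exact hx
  | fn f as ha _ ih => exact A.fn_mem f as ha ih

/-- The substructure of `A` generated by the tuple `s`. -/
def Str.sub (A : Str L) (s : List ℕ) : Str L where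
  dom := { x | InClosure A s x }
  rel r as := A.rel r as ∧ ∀ x ∈ as, InClosure A s x
  fn := A.fn
  rel_valid := fun r as h => ⟨(A.rel_valid r as h.1).1, h.2⟩
  fn_mem := fun f as ha hm => InClosure.fn f as ha hm

/-- `h` is an embedding of `A` into `B`. -/
def IsEmbMap (A B : Str L) (h : ℕ → ℕ) : Prop :=
  (∀ x ∈ A.dom, h x ∈ B.dom) ∧
  (∀ x ∈ A.dom, ∀ y ∈ A.dom, h x = h y → x = y) ∧
  (∀ r as, TupleIn A as → (A.rel r as ↔ B.rel r (as.map h))) ∧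
  (∀ f as, L.funArity f = some as.length → TupleIn A as →
    h (A.fn f as) = B.fn f (as.map h))

/-- `A` embeds into `B`. -/
def Embeds (A B : Str L) : Prop := ∃ h, IsEmbMap A B h

/-- `h` is an isomorphism of `A` onto `B`. -/
def IsIsoMap (A B : Str L) (h : ℕ → ℕ) : Prop :=
  IsEmbMap A B h ∧ ∀ y ∈ B.dom, ∃ x ∈ A.dom, h x = y

/-- `A` and `B` are isomorphic. -/
def Isom (A B : Str L) : Prop := ∃ h, IsIsoMap A B h

/-- `as ∼cl bs`: the coordinatewise map extends to an isomorphism of generated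
substructures. -/
def ClSim (A : Str L) (as : List ℕ) (B : Str L) (bs : List ℕ) : Prop :=
  ∃ h : ℕ → ℕ, as.map h = bs ∧ IsIsoMap (A.sub as) (B.sub bs) h

/-- `as ∼tuple bs`: equal length and the same pattern of equalities among coordinates. -/
def TupleSim (as bs : List ℕ) : Prop :=
  ∃ h h' : ℕ → ℕ, as.map h = bs ∧ bs.map h' = as

/-- `A` is finitely generated. -/
def Str.FG (A : Str L) : Prop :=
  ∃ s : List ℕ, TupleIn A s ∧ ∀ x, x ∈ A.dom ↔ InClosure A s x

/-- `g` is an automorphism of `M`. -/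
def IsAutoOf (M : Str L) (g : ℕ → ℕ) : Prop := IsIsoMap M M g

/-! ### Ages (as isomorphism-closed classes) -/

/-- `B` belongs to the age of `M`, i.e. `B` is isomorphic to a finitely generated
substructure of `M`. -/
def AgeMemOf (M : Str L) (B : Str L) : Prop :=
  ∃ as : List ℕ, TupleIn M as ∧ Isom B (M.sub as)

/-- The age of a structure `M`. -/
def ageOf (M : Str L) : Set (Str L) := { B | AgeMemOf M B }

/-- The hereditary property. -/
def HP (C : Set (Str L)) : Prop :=
  ∀ B ∈ C, ∀ as : List ℕ, TupleIn B as → B.sub as ∈ C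

/-- The joint embedding property. -/
def JEP (C : Set (Str L)) : Prop :=
  ∀ A ∈ C, ∀ B ∈ C, ∃ D ∈ C, Embeds A D ∧ Embeds B D

/-- Every pair of embeddings with domain `A` into members of `C` can be amalgamated
over `A` inside `C`. -/
def AmalgamatesOver (C : Set (Str L)) (A : Str L) : Prop :=
  ∀ B₀ ∈ C, ∀ B₁ ∈ C, ∀ f₀ f₁ : ℕ → ℕ, IsEmbMap A B₀ f₀ → IsEmbMap A B₁ f₁ →
    ∃ D ∈ C, ∃ g₀ g₁ : ℕ → ℕ, IsEmbMap B₀ D g₀ ∧ IsEmbMap B₁ D g₁ ∧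
      ∀ x ∈ A.dom, g₀ (f₀ x) = g₁ (f₁ x)

/-- The amalgamation property. -/
def AP (C : Set (Str L)) : Prop := ∀ A ∈ C, AmalgamatesOver C A

/-- `A` is an amalgamation base of the class `C`. -/
def AmalgBase (C : Set (Str L)) (A : Str L) : Prop := A ∈ C ∧ AmalgamatesOver C A

/-- The cofinal amalgamation property. -/
def CoAP (C : Set (Str L)) : Prop :=
  ∀ A ∈ C, ∃ A' : Str L, AmalgBase C A' ∧ Embeds A A'

/-! ### Computable ages -/

/-- An (abstract) enumerated age: for each index `i`, a generating tuple `tup i` and the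
structure `str i` it generates. -/
structure CompAge (L : Lang) where
  tup : ℕ → List ℕ
  str : ℕ → Str L
  tup_mem : ∀ i, TupleIn (str i) (tup i)
  gen : ∀ i x, x ∈ (str i).dom ↔ InClosure (str i) (tup i) x

/-- The class of structures represented by the enumerated age `K`. -/
def CompAge.cls (K : CompAge L) : Set (Str L) := { B | ∃ i, Isom B (K.str i) }

/-- The structure `M` is computable in the oracle set `s`. -/
def StrComputableIn (s : Set ℕ) (M : Str L) : Prop :=
  SetRecIn s M.dom ∧
  SetRecIn s { p | ∃ r as, TupleIn M as ∧ M.rel r as ∧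
      p = Nat.pair r (Encodable.encode as) } ∧
  SetRecIn s { p | ∃ f as b, L.funArity f = some as.length ∧ TupleIn M as ∧
      M.fn f as = b ∧ p = Nat.pair f (Nat.pair (Encodable.encode as) b) }

/-- The coded diagram of an enumerated age. -/
def CompAge.diag (K : CompAge L) : Set ℕ :=
  { p | ∃ i, p = Nat.pair 0 (Nat.pair i (Encodable.encode (K.tup i))) } ∪
  { p | ∃ i x, x ∈ (K.str i).dom ∧ p = Nat.pair 1 (Nat.pair i x) } ∪
  { p | ∃ i r as, TupleIn (K.str i) as ∧ (K.str i).rel r as ∧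
      p = Nat.pair 2 (Nat.pair i (Nat.pair r (Encodable.encode as))) } ∪
  { p | ∃ i r as, TupleIn (K.str i) as ∧ L.relArity r = some as.length ∧
      ¬ (K.str i).rel r as ∧
      p = Nat.pair 3 (Nat.pair i (Nat.pair r (Encodable.encode as))) } ∪
  { p | ∃ i f as b, TupleIn (K.str i) as ∧ L.funArity f = some as.length ∧
      (K.str i).fn f as = b ∧
      p = Nat.pair 4 (Nat.pair i (Nat.pair f (Nat.pair (Encodable.encode as) b))) }

/-- `K` is an `s`-computable age: its diagram is c.e. in `s` and each of its structures
is computable in `s`. -/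
def AgeComputableIn (s : Set ℕ) (K : CompAge L) : Prop :=
  CEIn s K.diag ∧ ∀ i, StrComputableIn s (K.str i)

/-- The embedding information of an enumerated age, as a set of naturals. -/
def EmbedInfo (K : CompAge L) : Set ℕ :=
  { p | ∃ k₀ b₀ k₁ b₁, TupleIn (K.str k₀) b₀ ∧ TupleIn (K.str k₁) b₁ ∧
      ClSim (K.str k₀) b₀ (K.str k₁) b₁ ∧
      p = Nat.pair k₀ (Nat.pair (Encodable.encode b₀)
            (Nat.pair k₁ (Encodable.encode b₁))) }

/-! ### Potential embeddings, spans, and amalgamation diagrams -/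

/-- A potential embedding: a pair of indices and a tuple in the codomain structure. -/
structure PotEmb where
  i : ℕ
  j : ℕ
  c : List ℕ

/-- A numerical code of a potential embedding. -/
def PotEmb.code (F : PotEmb) : ℕ :=
  Nat.pair F.i (Nat.pair F.j (Encodable.encode F.c))

/-- The potential embedding is well-formed with respect to `K`. -/
def PotEmb.Valid (K : CompAge L) (F : PotEmb) : Prop :=
  F.c.length = (K.tup F.i).length ∧ TupleIn (K.str F.j) F.c

/-- The potential embedding is an embedding. -/
def PotEmb.IsEmb (K : CompAge L) (F : PotEmb) : Prop :=
  ClSim (K.str F.i) (K.tup F.i) (K.str F.j) F.c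

/-- The potential embedding is an isomorphism (its range generates the codomain). -/
def PotEmb.IsIso (K : CompAge L) (F : PotEmb) : Prop :=
  F.IsEmb K ∧ ∀ x ∈ (K.str F.j).dom, InClosure (K.str F.j) F.c x

/-- `h` realizes the potential embedding `F` as a map on the domain structure. -/
def ExtMap (K : CompAge L) (F : PotEmb) (h : ℕ → ℕ) : Prop :=
  (K.tup F.i).map h = F.c ∧ IsEmbMap (K.str F.i) (K.str F.j) h

/-- `(F₀, F₁)` is a potential span. -/
def PotSpan (K : CompAge L) (F₀ F₁ : PotEmb) : Prop :=
  F₀.Valid K ∧ F₁.Valid K ∧ F₀.i = F₁.i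

/-- `(G₀, G₁)` is an amalgamation diagram over the potential span `(F₀, F₁)`. -/
def AmalgDiagOver (K : CompAge L) (F₀ F₁ G₀ G₁ : PotEmb) : Prop :=
  G₀.Valid K ∧ G₁.Valid K ∧ G₀.IsEmb K ∧
  G₀.i = F₀.j ∧ G₁.i = F₁.j ∧ G₀.j = G₁.j ∧
  (F₀.IsEmb K → F₁.IsEmb K → G₁.IsEmb K ∧
    ∀ h₀ h₁ : ℕ → ℕ, ExtMap K G₀ h₀ → ExtMap K G₁ h₁ →
      F₀.c.map h₀ = F₁.c.map h₁)

/-- `H` is the composition `F ∘ G` of potential embeddings (where `F` is an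
embedding realized by any `h` extending it). -/
def CompRel (K : CompAge L) (F G H : PotEmb) : Prop :=
  G.j = F.i ∧ H.i = G.i ∧ H.j = F.j ∧
  ∀ h : ℕ → ℕ, ExtMap K F h → H.c = G.c.map h

/-! ### Computable versions of HP, JEP, AP, coAP -/

/-- The `s`-computable hereditary property. -/
def CHP (s : Set ℕ) (K : CompAge L) : Prop :=
  ∃ c : OCode, ∀ i (b : List ℕ), TupleIn (K.str i) b →
    ∃ j, OCode.eval (chi s) c (Nat.pair i (Encodable.encode b)) = Part.some j ∧
      ClSim (K.str j) (K.tup j) (K.str i) b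

/-- The `s`-computable joint embedding property. -/
def CJEP (s : Set ℕ) (K : CompAge L) : Prop :=
  ∃ c : OCode, ∀ i j : ℕ, ∃ F G : PotEmb,
    OCode.eval (chi s) c (Nat.pair i j) = Part.some (Nat.pair F.code G.code) ∧
    F.Valid K ∧ G.Valid K ∧ F.IsEmb K ∧ G.IsEmb K ∧
    F.i = i ∧ G.i = j ∧ F.j = G.j

/-- The `s`-computable amalgamation property. -/
def CAP (s : Set ℕ) (K : CompAge L) : Prop :=
  ∃ c : OCode, ∀ F₀ F₁ : PotEmb, PotSpan K F₀ F₁ →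
    ∃ G₀ G₁ : PotEmb,
      OCode.eval (chi s) c (Nat.pair F₀.code F₁.code) =
        Part.some (Nat.pair G₀.code G₁.code) ∧
      AmalgDiagOver K F₀ F₁ G₀ G₁

/-- A family `W` of distinguished embeddings with amalgamation-base codomains, closed
under pre/post composition with isomorphisms, covering all domains. -/
def IsCoAPFamily (K : CompAge L) (W : Set PotEmb) : Prop :=
  (∀ F ∈ W, F.Valid K ∧ F.IsEmb K ∧ AmalgBase K.cls (K.str F.j)) ∧
  (∀ F ∈ W, ∀ G H : PotEmb, G.Valid K → G.IsIso K → G.j = F.i →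
      CompRel K F G H → H ∈ W) ∧
  (∀ F ∈ W, ∀ G H : PotEmb, G.Valid K → G.IsIso K → G.i = F.j →
      CompRel K G F H → H ∈ W) ∧
  (∀ i : ℕ, ∃ F ∈ W, F.i = i)

/-- The `s`-computable cofinal amalgamation property: there is an `s`-c.e. family of
distinguished embeddings onto amalgamation bases together with an `s`-computable
amalgamation function. -/
def CcoAP (s : Set ℕ) (K : CompAge L) : Prop :=
  ∃ W : Set PotEmb, IsCoAPFamily K W ∧
    CEIn s { p | ∃ F ∈ W, p = F.code } ∧
    ∃ c : OCode, ∀ F ∈ W, ∀ G₀ G₁ : PotEmb,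
      G₀.Valid K → G₁.Valid K → G₀.i = F.j → G₁.i = F.j →
      ∃ D₀ D₁ : PotEmb,
        OCode.eval (chi s) c (Nat.pair F.code (Nat.pair G₀.code G₁.code)) =
          Part.some (Nat.pair D₀.code D₁.code) ∧
        AmalgDiagOver K G₀ G₁ D₀ D₁

/-! ### Ultrahomogeneity -/

/-- `M` is ultrahomogeneous: every isomorphism between finitely generated substructures
extends to an automorphism. -/
def Ultrahomogeneous (M : Str L) : Prop :=
  ∀ as bs : List ℕ, TupleIn M as → TupleIn M bs → ClSim M as M bs →
    ∃ g : ℕ → ℕ, IsAutoOf M g ∧ as.map g = bs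

/-- `g` is a bijection of the underlying set of `M` with itself. -/
def BijOnDom (M : Str L) (g : ℕ → ℕ) : Prop :=
  (∀ x ∈ M.dom, g x ∈ M.dom) ∧
  (∀ x ∈ M.dom, ∀ y ∈ M.dom, g x = g y → x = y) ∧
  (∀ y ∈ M.dom, ∃ x ∈ M.dom, g x = y)

/-- `M` is `s`-computably ultrahomogeneous. -/
def CompUltrahom (s : Set ℕ) (M : Str L) : Prop :=
  ∃ c : OCode, ∀ as bs : List ℕ, TupleIn M as → TupleIn M bs →
    as.length = bs.length →
    ∃ e : ℕ,
      OCode.eval (chi s) c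
          (Nat.pair (Encodable.encode as) (Encodable.encode bs)) = Part.some e ∧
      ∃ c' : OCode, c'.encodeCode = e ∧ ∃ g : ℕ → ℕ, ComputesIn s c' g ∧
        BijOnDom M g ∧
        (ClSim M as M bs → IsAutoOf M g ∧ as.map g = bs)

/-! ### Cofinal ultrahomogeneity -/

/-- `M` is cofinally ultrahomogeneous. -/
def CofinallyUltrahomogeneous (M : Str L) : Prop :=
  ∀ as : List ℕ, TupleIn M as → ∃ bs : List ℕ, TupleIn M bs ∧
    (∀ x ∈ as, InClosure M bs x) ∧
    ∀ cs : List ℕ, TupleIn M cs → ClSim M bs M cs →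
      ∃ g : ℕ → ℕ, IsAutoOf M g ∧ bs.map g = cs

/-- `E` is a cofinal collection of tuples in `M`. -/
def IsCofinalCollection (M : Str L) (E : Set (List ℕ)) : Prop :=
  (∀ bs ∈ E, TupleIn M bs) ∧
  (∀ as : List ℕ, TupleIn M as → ∃ bs ∈ E, ∀ x ∈ as, InClosure M bs x) ∧
  (∀ bs ∈ E, ∀ as : List ℕ, (∀ x ∈ as, InClosure M bs x) → (as ++ bs) ∈ E) ∧
  (∀ as ∈ E, ∀ bs : List ℕ, TupleIn M bs → ClSim M as M bs → bs ∈ E)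

/-- `M` is cofinally ultrahomogeneous for the collection `E`: every isomorphism between
substructures generated by members of `E` extends to an automorphism. -/
def CofUltraFor (M : Str L) (E : Set (List ℕ)) : Prop :=
  ∀ as ∈ E, ∀ bs ∈ E, ClSim M as M bs →
    ∃ g : ℕ → ℕ, IsAutoOf M g ∧ as.map g = bs

/-- The set of codes of members of `E`. -/
def ECodes (E : Set (List ℕ)) : Set ℕ := { p | ∃ as ∈ E, p = Encodable.encode as }

/-- The functional part of `s`-computable cofinal ultrahomogeneity with respect to `E`. -/
def CofUltraFunIn (s : Set ℕ) (M : Str L) (E : Set (List ℕ)) : Prop :=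
  ∃ c : OCode, ∀ as ∈ E, ∀ bs : List ℕ, TupleIn M bs → TupleSim as bs →
    ∃ e : ℕ,
      OCode.eval (chi s) c
          (Nat.pair (Encodable.encode as) (Encodable.encode bs)) = Part.some e ∧
      ∃ c' : OCode, c'.encodeCode = e ∧ ∃ g : ℕ → ℕ, ComputesIn s c' g ∧
        BijOnDom M g ∧ as.map g = bs ∧
        (ClSim M as M bs → IsAutoOf M g)

/-- `M` is `s`-computably cofinally ultrahomogeneous with respect to `E`. -/
def CompCofUltrahomWrt (s : Set ℕ) (M : Str L) (E : Set (List ℕ)) : Prop :=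
  IsCofinalCollection M E ∧ SetRecIn s (ECodes E) ∧ CofUltraFunIn s M E

/-- `M` is `s`-computably cofinally ultrahomogeneous. -/
def CompCofUltrahom (s : Set ℕ) (M : Str L) : Prop :=
  ∃ E : Set (List ℕ), CompCofUltrahomWrt s M E

/-- The `s`-computable cofinal extension property with respect to `E`. -/
def CompCofExtProp (s : Set ℕ) (M : Str L) (E : Set (List ℕ)) : Prop :=
  ∃ c : OCode, ∀ as bs cs : List ℕ, as ∈ E → cs ∈ E → TupleIn M bs →
    (∀ x ∈ as, InClosure M cs x) → TupleSim as bs →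
    ∃ ds : List ℕ,
      OCode.eval (chi s) c
          (Nat.pair (Encodable.encode as)
            (Nat.pair (Encodable.encode bs) (Encodable.encode cs))) =
        Part.some (Encodable.encode ds) ∧
      TupleIn M ds ∧ TupleSim (as ++ cs) (bs ++ ds) ∧
      (ClSim M as M bs →
        ClSim M ds M cs ∧ (∀ x ∈ bs, InClosure M ds x) ∧
        ∀ h h' : ℕ → ℕ,
          ds.map h = cs → IsIsoMap (M.sub ds) (M.sub cs) h →
          bs.map h' = as → IsIsoMap (M.sub bs) (M.sub as) h' →
          bs.map h = bs.map h')

/-! ### Canonical ages and limits -/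

/-- `K` is a canonical age of `M` (relative to the oracle `t`): the enumeration of
generating tuples is `t`-computable, lists every finite tuple of `M` infinitely often,
and `str i` is the substructure generated by `tup i`. -/
def IsCanonicalAgeOf (t : Set ℕ) (K : CompAge L) (M : Str L) : Prop :=
  TotalComputableIn t (fun i => Encodable.encode (K.tup i)) ∧
  (∀ i, TupleIn M (K.tup i)) ∧
  (∀ as : List ℕ, TupleIn M as → ∀ n : ℕ, ∃ i, n ≤ i ∧ K.tup i = as) ∧
  (∀ i, K.str i = M.sub (K.tup i))

/-- `K` represents the age of `M`. -/
def RepresentsAgeOf (K : CompAge L) (M : Str L) : Prop :=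
  (∀ i, AgeMemOf M (K.str i)) ∧
  (∀ B : Str L, AgeMemOf M B → ∃ i, Isom B (K.str i))

/-- `M` is a cofinal Fraïssé limit of (the age represented by) `K`. -/
def CofinalFraisseLimitOf (K : CompAge L) (M : Str L) : Prop :=
  CofinallyUltrahomogeneous M ∧ RepresentsAgeOf K M

/-- The enumerated age `K` is uniformly finite. -/
def UniformlyFinite (K : CompAge L) : Prop :=
  L.FiniteLang ∧ ∃ f : ℕ → ℕ, TotalComputableIn ∅ f ∧
    ∀ i, ∀ as : List ℕ, TupleIn (K.str i) as →
      { x | InClosure (K.str i) as x }.Finite ∧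
      { x | InClosure (K.str i) as x }.ncard ≤ f as.length

/-!
Take for `W` the embeddings whose codomain is generated by a member of the cofinal collection `E`.
Cofinal ultrahomogeneity says that every embedding of such a codomain into `M` is undone by an
automorphism of `M`. Pulling embeddings out of the codomain back along these automorphisms shows
that it is an amalgamation base, and amalgamates spans of embeddings out of it inside the
canonical age. Membership in `W` and the correctness of a proposed amalgam are witnessed by
finitely many queries to `EmbedInfo`, to `E` and to the enumeration of the canonical age, all
decidable in `s`: so `W` is c.e. in `s`, and the amalgamation function is an unbounded search for
such a certificate. When the given potential span is not a span of embeddings, any joint embedding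
of the two codomains into the age is an acceptable answer.
-/

open Encodable

section Structures

variable {A B C M : Str L} {a b t : List ℕ} {f g : ℕ → ℕ}

theorem InClosure.trans {x : ℕ} (hab : ∀ y ∈ a, InClosure M b y) (hx : InClosure M a x) :
    InClosure M b x := by
  induction hx with
  | base hmem _ => exact hab _ hmem
  | fn f l ha _ ih => exact InClosure.fn f l ha ih

theorem inClosure_sub_iff {u : List ℕ} (hu : ∀ y ∈ a, InClosure M u y) {x : ℕ} :
    InClosure (M.sub u) a x ↔ InClosure M a x := by
  constructor <;> intro h <;> induction h with
  | base hmem hdom => first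
      | exact InClosure.base hmem hdom.mem_dom
      | exact InClosure.base hmem (hu _ hmem)
  | fn f l ha _ ih => exact InClosure.fn f l ha ih

theorem Str.ext {A B : Str L} (h1 : A.dom = B.dom) (h2 : A.rel = B.rel) (h3 : A.fn = B.fn) :
    A = B := by
  cases A; cases B; cases h1; cases h2; cases h3; rfl

theorem Str.sub_sub {u : List ℕ} (hu : ∀ y ∈ a, InClosure M u y) :
    (M.sub u).sub a = M.sub a := by
  refine Str.ext (Set.ext fun x => inClosure_sub_iff hu) ?_ rfl
  funext r as
  refine propext ⟨fun ⟨⟨hr, _⟩, hm⟩ => ⟨hr, fun x hx => (inClosure_sub_iff hu).1 (hm x hx)⟩,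
    fun ⟨hr, hm⟩ => ⟨⟨hr, fun x hx => (hm x hx).trans hu⟩,
      fun x hx => (inClosure_sub_iff hu).2 (hm x hx)⟩⟩

theorem Str.sub_eq_self (ht : ∀ x, x ∈ A.dom ↔ InClosure A t x) : A.sub t = A := by
  refine Str.ext (Set.ext fun x => (ht x).symm) ?_ rfl
  funext r as
  exact propext ⟨fun h => h.1, fun h =>
    ⟨h, fun x hx => (ht x).1 ((A.rel_valid r as h).2 x hx)⟩⟩

theorem TupleIn.append (ha : TupleIn A a) (hb : TupleIn A b) : TupleIn A (a ++ b) :=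
  fun x hx => (List.mem_append.1 hx).elim (ha x) (hb x)

theorem IsEmbMap.tupleIn_map (hf : IsEmbMap A B f) (ha : TupleIn A a) :
    TupleIn B (a.map f) := by
  simp only [TupleIn, List.mem_map, forall_exists_index, and_imp, forall_apply_eq_imp_iff₂]
  exact fun x hx => hf.1 x (ha x hx)

theorem IsIsoMap.id : IsIsoMap A A id :=
  ⟨⟨fun _ hx => hx, fun _ _ _ _ h => h, fun _ _ _ => by rw [List.map_id],
    fun _ _ _ _ => by rw [List.map_id]; rfl⟩, fun y hy => ⟨y, hy, rfl⟩⟩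

theorem IsEmbMap.comp (hg : IsEmbMap B C g) (hf : IsEmbMap A B f) : IsEmbMap A C (g ∘ f) := by
  refine ⟨fun x hx => hg.1 _ (hf.1 _ hx),
    fun x hx y hy h => hf.2.1 x hx y hy (hg.2.1 _ (hf.1 _ hx) _ (hf.1 _ hy) h),
    fun r as has => ?_, fun fc as harity has => ?_⟩
  · rw [hf.2.2.1 r as has, hg.2.2.1 r _ (hf.tupleIn_map has), List.map_map]
  · rw [Function.comp_apply, hf.2.2.2 fc as harity has,
      hg.2.2.2 fc _ (by rwa [List.length_map]) (hf.tupleIn_map has), List.map_map]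

theorem IsIsoMap.comp (hg : IsIsoMap B C g) (hf : IsIsoMap A B f) : IsIsoMap A C (g ∘ f) := by
  refine ⟨hg.1.comp hf.1, fun z hz => ?_⟩
  obtain ⟨y, hy, rfl⟩ := hg.2 z hz
  obtain ⟨x, hx, rfl⟩ := hf.2 y hy
  exact ⟨x, hx, rfl⟩

theorem IsEmbMap.of_sub (hf : IsEmbMap A (B.sub b) f) : IsEmbMap A B f := by
  refine ⟨fun x hx => (hf.1 x hx).mem_dom, hf.2.1, fun r as has => ?_, hf.2.2.2⟩
  rw [hf.2.2.1 r as has]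
  exact and_iff_left_of_imp fun _ => hf.tupleIn_map has

theorem IsEmbMap.to_sub (hf : IsEmbMap A B f) (hcl : ∀ x ∈ A.dom, InClosure B b (f x)) :
    IsEmbMap A (B.sub b) f := by
  refine ⟨hcl, hf.2.1, fun r as has => ?_, hf.2.2.2⟩
  rw [hf.2.2.1 r as has]
  refine (and_iff_left_of_imp fun _ => ?_).symm
  simp only [List.mem_map, forall_exists_index, and_imp, forall_apply_eq_imp_iff₂]
  exact fun x hx => hcl x (has x hx)

theorem isEmbMap_sub_id : IsEmbMap (A.sub t) A id :=
  (IsIsoMap.id (A := A.sub t)).1.of_sub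

theorem IsEmbMap.inClosure_map (hf : IsEmbMap A B f) {x : ℕ} (hx : InClosure A a x) :
    InClosure B (a.map f) (f x) := by
  induction hx with
  | base hm hd => exact InClosure.base (List.mem_map_of_mem hm) (hf.1 _ hd)
  | fn fc l harity hml ih =>
      rw [hf.2.2.2 fc l harity fun y hy => (hml y hy).mem_dom]
      refine InClosure.fn fc (l.map f) (by rwa [List.length_map]) ?_
      simpa only [List.mem_map, forall_exists_index, and_imp, forall_apply_eq_imp_iff₂]
        using ih

theorem IsEmbMap.exists_of_inClosure_map (hf : IsEmbMap A B f) (ha : TupleIn A a) {y : ℕ}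
    (hy : InClosure B (a.map f) y) : ∃ x, InClosure A a x ∧ f x = y := by
  induction hy with
  | base hm _ =>
      obtain ⟨x, hx, rfl⟩ := List.mem_map.1 hm
      exact ⟨x, InClosure.base hx (ha x hx), rfl⟩
  | fn fc l harity _ ih =>
      choose! pre hpre using ih
      have hl : (l.map pre).map f = l := by
        rw [List.map_map]
        exact (List.map_congr_left fun y hy => (hpre y hy).2).trans (List.map_id' l)
      have harity' : L.funArity fc = some (l.map pre).length := by rwa [List.length_map]
      have hcl : ∀ x ∈ l.map pre, InClosure A a x := by
        simpa only [List.mem_map, forall_exists_index, and_imp, forall_apply_eq_imp_iff₂]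
          using fun y hy => (hpre y hy).1
      refine ⟨A.fn fc (l.map pre), InClosure.fn fc _ harity' hcl, ?_⟩
      rw [hf.2.2.2 fc _ harity' fun x hx => (hcl x hx).mem_dom, hl]

theorem IsEmbMap.isIsoMap_sub (hf : IsEmbMap A B f) (ha : TupleIn A a) :
    IsIsoMap (A.sub a) (B.sub (a.map f)) f := by
  refine ⟨⟨fun x hx => hf.inClosure_map hx,
    fun x hx y hy h => hf.2.1 x hx.mem_dom y hy.mem_dom h, fun r as has => ?_,
    fun fc as harity has => hf.2.2.2 fc as harity fun x hx => (has x hx).mem_dom⟩,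
    fun y hy => hf.exists_of_inClosure_map ha hy⟩
  rw [show (A.sub a).rel r as = (A.rel r as ∧ _) from rfl,
    hf.2.2.1 r as fun x hx => (has x hx).mem_dom]
  refine ⟨fun h => ⟨h.1, ?_⟩, fun h => ⟨h.1, has⟩⟩
  simpa only [List.mem_map, forall_exists_index, and_imp, forall_apply_eq_imp_iff₂]
    using fun x hx => hf.inClosure_map (has x hx)

theorem IsEmbMap.eq_of_inClosure (hf : IsEmbMap A B f) (hg : IsEmbMap A B g)
    (ht : ∀ x ∈ t, f x = g x) {x : ℕ} (hx : InClosure A t x) : f x = g x := by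
  induction hx with
  | base hm _ => exact ht _ hm
  | fn fc l harity hml ih =>
      have hl : TupleIn A l := fun y hy => (hml y hy).mem_dom
      rw [hf.2.2.2 fc l harity hl, hg.2.2.2 fc l harity hl, List.map_congr_left ih]

theorem IsIsoMap.exists_inverse (hf : IsIsoMap A B f) :
    ∃ g, IsIsoMap B A g ∧ ∀ x ∈ A.dom, g (f x) = x := by
  set g := Function.invFunOn f A.dom
  have hgB : ∀ y ∈ B.dom, g y ∈ A.dom ∧ f (g y) = y := fun y hy =>
    ⟨Function.invFunOn_mem (hf.2 y hy), Function.invFunOn_eq (hf.2 y hy)⟩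
  have hgf : ∀ x ∈ A.dom, g (f x) = x := fun x hx =>
    Set.InjOn.leftInvOn_invFunOn (f := f) (fun x hx y hy h => hf.1.2.1 x hx y hy h) hx
  have hmap : ∀ bs, TupleIn B bs → TupleIn A (bs.map g) ∧ (bs.map g).map f = bs :=
    fun bs hbs => ⟨by
      simpa only [TupleIn, List.mem_map, forall_exists_index, and_imp,
        forall_apply_eq_imp_iff₂] using fun y hy => (hgB y (hbs y hy)).1,
      by
        rw [List.map_map]
        exact (List.map_congr_left fun y hy => (hgB y (hbs y hy)).2).trans (List.map_id' bs)⟩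
  refine ⟨g, ⟨⟨fun y hy => (hgB y hy).1, fun y hy y' hy' h => by
      rw [← (hgB y hy).2, ← (hgB y' hy').2, h], fun r bs hbs => ?_,
      fun fc bs harity hbs => ?_⟩, fun x hx => ⟨f x, hf.1.1 x hx, hgf x hx⟩⟩, hgf⟩
  · obtain ⟨hA, hfg⟩ := hmap bs hbs
    conv_lhs => rw [← hfg]
    exact (hf.1.2.2.1 r _ hA).symm
  · obtain ⟨hA, hfg⟩ := hmap bs hbs
    have harity' : L.funArity fc = some (bs.map g).length := by rwa [List.length_map]
    conv_lhs => rw [← hfg, ← hf.1.2.2.2 fc _ harity' hA]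
    exact hgf _ (A.fn_mem fc _ harity' hA)

end Structures

section ClosureSimilarity

variable {A B C : Str L} {a b c : List ℕ} {f : ℕ → ℕ}

theorem ClSim.length_eq (h : ClSim A a B b) : b.length = a.length := by
  obtain ⟨f, rfl, _⟩ := h
  exact List.length_map _

theorem ClSim.refl (A : Str L) (a : List ℕ) : ClSim A a A a :=
  ⟨id, List.map_id a, .id⟩

theorem ClSim.trans (h₁ : ClSim A a B b) (h₂ : ClSim B b C c) : ClSim A a C c := by
  obtain ⟨f, rfl, hf⟩ := h₁
  obtain ⟨g, rfl, hg⟩ := h₂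
  exact ⟨g ∘ f, (List.map_map ..).symm, hg.comp hf⟩

theorem ClSim.symm (ha : TupleIn A a) (h : ClSim A a B b) : ClSim B b A a := by
  obtain ⟨f, rfl, hf⟩ := h
  obtain ⟨g, hg, hgf⟩ := hf.exists_inverse
  refine ⟨g, ?_, hg⟩
  rw [List.map_map]
  exact (List.map_congr_left fun x hx => hgf x (InClosure.base hx (ha x hx))).trans
    (List.map_id' a)

theorem ClSim.tupleSim (ha : TupleIn A a) (h : ClSim A a B b) : TupleSim a b := by
  obtain ⟨g, hg, _⟩ := h.symm ha
  obtain ⟨f, hf, _⟩ := h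
  exact ⟨f, g, hf, hg⟩

theorem IsEmbMap.clSim_map (hf : IsEmbMap A B f) (ha : TupleIn A a) : ClSim A a B (a.map f) :=
  ⟨f, rfl, hf.isIsoMap_sub ha⟩

end ClosureSimilarity

section Ages

variable {K : CompAge L} {F G H : PotEmb} {a : List ℕ}

theorem CompAge.sub_tup (K : CompAge L) (i : ℕ) : (K.str i).sub (K.tup i) = K.str i :=
  Str.sub_eq_self (K.gen i)

theorem CompAge.sub_tup_append (K : CompAge L) (j : ℕ) (b : List ℕ) :
    (K.str j).sub (K.tup j ++ b) = K.str j :=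
  Str.sub_eq_self fun x => ⟨fun hx => ((K.gen j x).1 hx).trans fun y hy =>
    InClosure.base (List.mem_append_left _ hy) (K.tup_mem j y hy), InClosure.mem_dom⟩

theorem PotEmb.IsEmb.exists_extMap (hF : F.IsEmb K) : ∃ h, ExtMap K F h := by
  obtain ⟨h, hmap, hiso⟩ := hF
  rw [K.sub_tup] at hiso
  exact ⟨h, hmap, hiso.1.of_sub⟩

theorem encode_mem_embedInfo {k₀ k₁ : ℕ} {b₀ b₁ : List ℕ} :
    encode (k₀, b₀, k₁, b₁) ∈ EmbedInfo K ↔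
      TupleIn (K.str k₀) b₀ ∧ TupleIn (K.str k₁) b₁ ∧ ClSim (K.str k₀) b₀ (K.str k₁) b₁ := by
  refine ⟨fun ⟨k₀', b₀', k₁', b₁', h₀, h₁, h, heq⟩ => ?_,
    fun h => ⟨k₀, b₀, k₁, b₁, h.1, h.2.1, h.2.2, rfl⟩⟩
  simp only [encode_prod_val, encode_nat, Nat.pair_eq_pair,
    encode_inj] at heq
  obtain ⟨rfl, rfl, rfl, rfl⟩ := heq
  exact ⟨h₀, h₁, h⟩

theorem encode_mem_eCodes {E : Set (List ℕ)} : encode a ∈ ECodes E ↔ a ∈ E :=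
  ⟨fun ⟨_, h, heq⟩ => encode_injective heq ▸ h, fun h => ⟨a, h, rfl⟩⟩

def PotEmb.EmbTest (K : CompAge L) (F : PotEmb) : Prop :=
  encode (F.i, K.tup F.i, F.j, F.c) ∈ EmbedInfo K

theorem PotEmb.embTest_iff : F.EmbTest K ↔ TupleIn (K.str F.j) F.c ∧ F.IsEmb K := by
  rw [PotEmb.EmbTest, encode_mem_embedInfo]
  exact and_iff_right (K.tup_mem F.i)

theorem PotEmb.valid_and_isEmb_iff : F.Valid K ∧ F.IsEmb K ↔ F.EmbTest K := by
  rw [PotEmb.embTest_iff]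
  exact ⟨fun ⟨hv, he⟩ => ⟨hv.2, he⟩, fun ⟨hc, he⟩ => ⟨⟨he.length_eq, hc⟩, he⟩⟩

theorem CompRel.valid_isEmb (hF : F.IsEmb K) (hGv : G.Valid K) (hG : G.IsEmb K)
    (hcomp : CompRel K F G H) : H.Valid K ∧ H.IsEmb K := by
  obtain ⟨hGF, hHi, hHj, hHc⟩ := hcomp
  obtain ⟨f, hf⟩ := hF.exists_extMap
  have hGc : TupleIn (K.str F.i) G.c := hGF ▸ hGv.2
  have hH : H.IsEmb K := by
    rw [PotEmb.IsEmb, hHi, hHj, hHc f hf]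
    exact (hGF ▸ hG : ClSim _ _ (K.str F.i) G.c).trans (hf.2.clSim_map hGc)
  exact ⟨⟨hH.length_eq, by rw [hHj, hHc f hf]; exact hf.2.tupleIn_map hGc⟩, hH⟩

end Ages

section CofinalUltrahomogeneity

variable {M : Str L} {E : Set (List ℕ)} {a : List ℕ}

theorem CofUltraFunIn.cofUltraFor {s : Set ℕ} (hcu : CofUltraFunIn s M E)
    (hE : IsCofinalCollection M E) : CofUltraFor M E := by
  intro as has bs hbs hcl
  obtain ⟨c, hc⟩ := hcu
  obtain ⟨_, _, _, _, g, _, _, hmap, hauto⟩ :=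
    hc as has bs (hE.1 bs hbs) (hcl.tupleSim (hE.1 as has))
  exact ⟨g, hauto hcl, hmap⟩

theorem IsCofinalCollection.exists_auto_leftInverse (hE : IsCofinalCollection M E)
    (hult : CofUltraFor M E) (ha : a ∈ E) {η : ℕ → ℕ} (hη : IsEmbMap (M.sub a) M η) :
    ∃ γ, IsAutoOf M γ ∧ ∀ x ∈ (M.sub a).dom, γ (η x) = x := by
  have haM := hE.1 a ha
  have hself : ∀ y ∈ a, InClosure M a y := fun y hy => .base hy (haM y hy)
  have hcl : ClSim M a M (a.map η) := by
    simpa only [ClSim, Str.sub_sub hself] using hη.clSim_map hself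
  have hηa : a.map η ∈ E := hE.2.2.2 a ha _ (hη.tupleIn_map hself) hcl
  obtain ⟨γ, hγ, hγa⟩ := hult _ hηa a ha (hcl.symm haM)
  have hfix : ∀ y ∈ a, (γ ∘ η) y = id y :=
    List.map_inj_left.1 (by rw [← List.map_map, hγa, List.map_id])
  exact ⟨γ, hγ, fun x hx => (hγ.1.comp hη).eq_of_inClosure isEmbMap_sub_id hfix
    ((inClosure_sub_iff hself).2 hx)⟩

end CofinalUltrahomogeneity

section CanonicalAge

variable {M : Str L} {K : CompAge L} {E : Set (List ℕ)} {G : PotEmb} {i j : ℕ} {a b : List ℕ}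

theorem tupleIn_str_iff (hstr : ∀ i, K.str i = M.sub (K.tup i)) :
    TupleIn (K.str j) a ↔ ∀ x ∈ a, InClosure M (K.tup j) x := by
  rw [hstr j]; rfl

theorem TupleIn.of_str (hstr : ∀ i, K.str i = M.sub (K.tup i)) (ha : TupleIn (K.str j) a) :
    TupleIn M a :=
  fun x hx => ((tupleIn_str_iff hstr).1 ha x hx).mem_dom

theorem tupleIn_str_of_subset (hstr : ∀ i, K.str i = M.sub (K.tup i)) (hj : K.tup j = a)
    (ha : TupleIn M a) (hb : b ⊆ a) : TupleIn (K.str j) b := by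
  rw [tupleIn_str_iff hstr, hj]
  exact fun x hx => .base (hb hx) (ha x (hb hx))

theorem str_sub (hstr : ∀ i, K.str i = M.sub (K.tup i)) (ha : TupleIn (K.str j) a) :
    (K.str j).sub a = M.sub a := by
  rw [tupleIn_str_iff hstr] at ha
  rw [hstr j, Str.sub_sub ha]

theorem clSim_str_iff (hstr : ∀ i, K.str i = M.sub (K.tup i)) (ha : TupleIn (K.str i) a)
    (hb : TupleIn (K.str j) b) : ClSim (K.str i) a (K.str j) b ↔ ClSim M a M b := by
  rw [ClSim, ClSim, str_sub hstr ha, str_sub hstr hb]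

theorem IsEmbMap.of_str (hstr : ∀ i, K.str i = M.sub (K.tup i)) {A : Str L} {f : ℕ → ℕ}
    (hf : IsEmbMap A (K.str i) f) : IsEmbMap A M f := by
  rw [hstr i] at hf
  exact hf.of_sub

-- Phrased with `K.tup j ++ cs` rather than an arbitrary generator so that it can be verified by
-- a search over `cs`.
def HasCofinalGenerator (K : CompAge L) (E : Set (List ℕ)) (j : ℕ) : Prop :=
  ∃ cs, TupleIn (K.str j) cs ∧ K.tup j ++ cs ∈ E

def cofinalEmbeddings (K : CompAge L) (E : Set (List ℕ)) : Set PotEmb :=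
  {F | F.Valid K ∧ F.IsEmb K ∧ HasCofinalGenerator K E F.j}

theorem HasCofinalGenerator.exists_auto_leftInverse (hstr : ∀ i, K.str i = M.sub (K.tup i))
    (hE : IsCofinalCollection M E) (hult : CofUltraFor M E) (hj : HasCofinalGenerator K E j)
    {η : ℕ → ℕ} (hη : IsEmbMap (K.str j) M η) :
    ∃ γ, IsAutoOf M γ ∧ ∀ x ∈ (K.str j).dom, γ (η x) = x := by
  obtain ⟨cs, hcs, hcsE⟩ := hj
  rw [← K.sub_tup_append j cs, str_sub hstr ((K.tup_mem j).append hcs)] at hη ⊢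
  exact hE.exists_auto_leftInverse hult hcsE hη

theorem HasCofinalGenerator.exists_retraction (hstr : ∀ i, K.str i = M.sub (K.tup i))
    (hE : IsCofinalCollection M E) (hult : CofUltraFor M E) (hj : HasCofinalGenerator K E j)
    {B : Str L} (hB : B ∈ K.cls) {f : ℕ → ℕ} (hf : IsEmbMap (K.str j) B f) :
    ∃ e d, IsEmbMap B M e ∧ TupleIn M d ∧ (∀ y ∈ B.dom, InClosure M d (e y)) ∧
      ∀ x ∈ (K.str j).dom, e (f x) = x := by
  obtain ⟨i, φ, hφ⟩ := hB
  have hφM := hφ.1.of_str hstr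
  obtain ⟨γ, hγ, hγφf⟩ := hj.exists_auto_leftInverse hstr hE hult (hφM.comp hf)
  refine ⟨γ ∘ φ, (K.tup i).map γ, hγ.1.comp hφM,
    hγ.1.tupleIn_map ((K.tup_mem i).of_str hstr), fun y hy => ?_, hγφf⟩
  have hφy := hφ.1.1 y hy
  rw [hstr i] at hφy
  exact hγ.1.inClosure_map hφy

theorem HasCofinalGenerator.amalgamatesOver (hstr : ∀ i, K.str i = M.sub (K.tup i))
    (hdense : ∀ as : List ℕ, TupleIn M as → ∀ n : ℕ, ∃ i, n ≤ i ∧ K.tup i = as)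
    (hE : IsCofinalCollection M E) (hult : CofUltraFor M E) (hj : HasCofinalGenerator K E j) :
    AmalgamatesOver K.cls (K.str j) := by
  intro B₀ hB₀ B₁ hB₁ f₀ f₁ hf₀ hf₁
  obtain ⟨e₀, d₀, he₀, hd₀, hcl₀, hef₀⟩ := hj.exists_retraction hstr hE hult hB₀ hf₀
  obtain ⟨e₁, d₁, he₁, hd₁, hcl₁, hef₁⟩ := hj.exists_retraction hstr hE hult hB₁ hf₁
  obtain ⟨k, -, hk⟩ := hdense (d₀ ++ d₁) (hd₀.append hd₁) 0
  refine ⟨K.str k, ⟨k, id, .id⟩, e₀, e₁, ?_, ?_, fun x hx => (hef₀ x hx).trans (hef₁ x hx).symm⟩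
  · rw [hstr k, hk]
    exact he₀.to_sub fun y hy => (hcl₀ y hy).trans fun z hz =>
      .base (List.mem_append_left _ hz) (hd₀ z hz)
  · rw [hstr k, hk]
    exact he₁.to_sub fun y hy => (hcl₁ y hy).trans fun z hz =>
      .base (List.mem_append_right _ hz) (hd₁ z hz)

theorem HasCofinalGenerator.of_isIso (hstr : ∀ i, K.str i = M.sub (K.tup i))
    (hE : IsCofinalCollection M E) (hj : HasCofinalGenerator K E G.i) (hGv : G.Valid K)
    (hG : G.IsIso K) : HasCofinalGenerator K E G.j := by
  obtain ⟨cs, hcs, hcsE⟩ := hj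
  obtain ⟨g, hgmap, hg⟩ := hG.1.exists_extMap
  have ha := (K.tup_mem G.i).append hcs
  have hga : (K.tup G.i ++ cs).map g = G.c ++ cs.map g := by rw [List.map_append, hgmap]
  have hgaS := hg.tupleIn_map ha
  have hgaE : (K.tup G.i ++ cs).map g ∈ E := hE.2.2.2 _ hcsE _ (hgaS.of_str hstr)
    ((clSim_str_iff hstr ha hgaS).1 (hg.clSim_map ha))
  refine ⟨_, hgaS, hE.2.2.1 _ hgaE _ fun x hx => ?_⟩
  have hx := hG.2 x (K.tup_mem G.j x hx)
  rw [hstr G.j, inClosure_sub_iff ((tupleIn_str_iff hstr).1 hGv.2)] at hx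
  exact hx.trans fun y hy => .base (by rw [hga]; exact List.mem_append_left _ hy)
    (hGv.2.of_str hstr y hy)

theorem exists_mem_cofinalEmbeddings (hstr : ∀ i, K.str i = M.sub (K.tup i))
    (hdense : ∀ as : List ℕ, TupleIn M as → ∀ n : ℕ, ∃ i, n ≤ i ∧ K.tup i = as)
    (hE : IsCofinalCollection M E) (i : ℕ) : ∃ F ∈ cofinalEmbeddings K E, F.i = i := by
  have hi := (K.tup_mem i).of_str hstr
  obtain ⟨bs, hbs, hcl⟩ := hE.2.1 (K.tup i) hi
  have hall := hi.append (hE.1 bs hbs)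
  obtain ⟨j, -, hj⟩ := hdense _ hall 0
  have hT := tupleIn_str_of_subset hstr hj hall (List.subset_append_left _ _)
  refine ⟨⟨i, j, K.tup i⟩, ⟨⟨rfl, hT⟩, (clSim_str_iff hstr (K.tup_mem i) hT).2 (.refl _ _),
    ⟨[], by simp [TupleIn], ?_⟩⟩, rfl⟩
  rw [List.append_nil, hj]
  exact hE.2.2.1 bs hbs _ hcl

theorem isCoAPFamily_cofinalEmbeddings (hstr : ∀ i, K.str i = M.sub (K.tup i))
    (hdense : ∀ as : List ℕ, TupleIn M as → ∀ n : ℕ, ∃ i, n ≤ i ∧ K.tup i = as)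
    (hE : IsCofinalCollection M E) (hult : CofUltraFor M E) :
    IsCoAPFamily K (cofinalEmbeddings K E) := by
  refine ⟨fun F ⟨hv, he, hj⟩ => ⟨hv, he, ⟨F.j, id, .id⟩,
      hj.amalgamatesOver hstr hdense hE hult⟩,
    fun F ⟨_, hFe, hj⟩ G H hGv hG _ hcomp => ?_,
    fun F ⟨hFv, hFe, hj⟩ G H hGv hG hGi hcomp => ?_, exists_mem_cofinalEmbeddings hstr hdense hE⟩
  · obtain ⟨hHv, hHe⟩ := hcomp.valid_isEmb hFe hGv hG.1
    exact ⟨hHv, hHe, hcomp.2.2.1 ▸ hj⟩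
  · obtain ⟨hHv, hHe⟩ := hcomp.valid_isEmb hG.1 hFv hFe
    exact ⟨hHv, hHe, hcomp.2.2.1 ▸ (hGi ▸ hj : HasCofinalGenerator K E G.i).of_isIso hstr hE hGv hG⟩

end CanonicalAge

section Certificates

variable {M : Str L} {K : CompAge L} {E : Set (List ℕ)} {F G G₀ G₁ : PotEmb} {j js : ℕ}
  {ds ds₀ ds₁ es : List ℕ} {γ : ℕ → ℕ}

theorem mem_cofinalEmbeddings_iff :
    F ∈ cofinalEmbeddings K E ↔ ∃ cs, F.EmbTest K ∧ encode (F.j, cs, F.j, cs) ∈ EmbedInfo K ∧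
      encode (K.tup F.j ++ cs) ∈ ECodes E := by
  constructor
  · rintro ⟨hv, he, cs, hcs, hcsE⟩
    exact ⟨cs, PotEmb.valid_and_isEmb_iff.1 ⟨hv, he⟩,
      encode_mem_embedInfo.2 ⟨hcs, hcs, .refl _ _⟩, encode_mem_eCodes.2 hcsE⟩
  · rintro ⟨cs, ht, hcs, hcsE⟩
    obtain ⟨hv, he⟩ := PotEmb.valid_and_isEmb_iff.2 ht
    exact ⟨hv, he, cs, (encode_mem_embedInfo.1 hcs).1, encode_mem_eCodes.1 hcsE⟩

def SpanCert (K : CompAge L) (G : PotEmb) (js : ℕ) (ds es : List ℕ) : Prop :=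
  encode (G.j, K.tup G.j ++ G.c, js, ds ++ es) ∈ EmbedInfo K ∧ ds.length = (K.tup G.j).length

def DegenerateCert (K : CompAge L) (G₀ G₁ : PotEmb) (js : ℕ) (ds₀ ds₁ : List ℕ) : Prop :=
  encode (G₀.j, K.tup G₀.j, js, ds₀) ∈ EmbedInfo K ∧ encode (js, ds₁, js, ds₁) ∈ EmbedInfo K ∧
    ds₁.length = (K.tup G₁.j).length

/-- The certificate searched for by the amalgamation function: `js` indexes the amalgam and
`ds₀`, `ds₁` are the images of the generators of the codomains of `G₀`, `G₁`; when both are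
embeddings, `es` is the common image of the generators of their domain. -/
def AmalgCert (K : CompAge L) (G₀ G₁ : PotEmb) (js : ℕ) (ds₀ ds₁ es : List ℕ) : Prop :=
  (G₀.EmbTest K ∧ G₁.EmbTest K) ∧ SpanCert K G₀ js ds₀ es ∧ SpanCert K G₁ js ds₁ es ∨
    ¬(G₀.EmbTest K ∧ G₁.EmbTest K) ∧ DegenerateCert K G₀ G₁ js ds₀ ds₁

theorem SpanCert.spec (hG : G.Valid K) (h : SpanCert K G js ds es) :
    PotEmb.Valid K ⟨G.j, js, ds⟩ ∧ PotEmb.IsEmb K ⟨G.j, js, ds⟩ ∧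
      ∀ g, ExtMap K ⟨G.j, js, ds⟩ g → G.c.map g = es := by
  obtain ⟨hEI, hlen⟩ := h
  obtain ⟨-, hT, f, hf, hiso⟩ := encode_mem_embedInfo.1 hEI
  rw [List.map_append] at hf
  obtain ⟨hds, hes⟩ := List.append_inj hf (by rw [List.length_map, hlen])
  rw [K.sub_tup_append] at hiso
  have hemb := hiso.1.of_sub
  have hD : PotEmb.IsEmb K ⟨G.j, js, ds⟩ := hds ▸ hemb.clSim_map (K.tup_mem G.j)
  refine ⟨⟨hD.length_eq, fun x hx => hT x (List.mem_append_left _ hx)⟩, hD, fun g hg => ?_⟩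
  rw [← hes]
  exact List.map_congr_left fun x hx => hg.2.eq_of_inClosure hemb
    (List.map_inj_left.1 (hg.1.trans hds.symm)) ((K.gen G.j x).1 (hG.2 x hx))

theorem amalgDiagOver_of_amalgCert (hG₀ : G₀.Valid K) (hG₁ : G₁.Valid K)
    (h : AmalgCert K G₀ G₁ js ds₀ ds₁ es) :
    AmalgDiagOver K G₀ G₁ ⟨G₀.j, js, ds₀⟩ ⟨G₁.j, js, ds₁⟩ := by
  rcases h with ⟨-, h₀, h₁⟩ | ⟨hnot, hEI₀, hEI₁, hlen⟩
  · obtain ⟨hv₀, he₀, hc₀⟩ := h₀.spec hG₀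
    obtain ⟨hv₁, he₁, hc₁⟩ := h₁.spec hG₁
    exact ⟨hv₀, hv₁, he₀, rfl, rfl, rfl, fun _ _ =>
      ⟨he₁, fun g₀ g₁ hg₀ hg₁ => (hc₀ g₀ hg₀).trans (hc₁ g₁ hg₁).symm⟩⟩
  · obtain ⟨-, hT₀, he₀⟩ := encode_mem_embedInfo.1 hEI₀
    refine ⟨⟨he₀.length_eq, hT₀⟩, ⟨hlen, (encode_mem_embedInfo.1 hEI₁).1⟩, he₀, rfl, rfl, rfl,
      fun h₀ h₁ => absurd ⟨?_, ?_⟩ hnot⟩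
    · exact PotEmb.valid_and_isEmb_iff.1 ⟨hG₀, h₀⟩
    · exact PotEmb.valid_and_isEmb_iff.1 ⟨hG₁, h₁⟩

theorem HasCofinalGenerator.exists_auto_map_eq (hstr : ∀ i, K.str i = M.sub (K.tup i))
    (hE : IsCofinalCollection M E) (hult : CofUltraFor M E) (hj : HasCofinalGenerator K E j)
    (hG : G.IsEmb K) (hGi : G.i = j) : ∃ γ, IsAutoOf M γ ∧ G.c.map γ = K.tup j := by
  subst hGi
  obtain ⟨g, hgmap, hg⟩ := hG.exists_extMap
  obtain ⟨γ, hγ, hγg⟩ := hj.exists_auto_leftInverse hstr hE hult (hg.of_str hstr)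
  refine ⟨γ, hγ, ?_⟩
  rw [← hgmap, List.map_map]
  exact (List.map_congr_left fun x hx => hγg x (K.tup_mem _ x hx)).trans (List.map_id' _)

theorem spanCert_of_auto (hstr : ∀ i, K.str i = M.sub (K.tup i)) (hG : G.Valid K)
    (hγ : IsAutoOf M γ) (hjs : TupleIn (K.str js) ((K.tup G.j ++ G.c).map γ)) :
    SpanCert K G js ((K.tup G.j).map γ) (G.c.map γ) := by
  refine ⟨?_, List.length_map _⟩
  have hT := (K.tup_mem G.j).append hG.2
  rw [← List.map_append, encode_mem_embedInfo]
  exact ⟨hT, hjs, (clSim_str_iff hstr hT hjs).2 (hγ.1.clSim_map (hT.of_str hstr))⟩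

theorem exists_spanCert (hstr : ∀ i, K.str i = M.sub (K.tup i))
    (hdense : ∀ as : List ℕ, TupleIn M as → ∀ n : ℕ, ∃ i, n ≤ i ∧ K.tup i = as)
    (hE : IsCofinalCollection M E) (hult : CofUltraFor M E) (hj : HasCofinalGenerator K E j)
    (hG₀ : G₀.Valid K) (hG₁ : G₁.Valid K) (he₀ : G₀.IsEmb K) (he₁ : G₁.IsEmb K)
    (hi₀ : G₀.i = j) (hi₁ : G₁.i = j) :
    ∃ (js : ℕ) (ds₀ ds₁ es : List ℕ), SpanCert K G₀ js ds₀ es ∧ SpanCert K G₁ js ds₁ es := by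
  obtain ⟨γ₀, hγ₀, hc₀⟩ := hj.exists_auto_map_eq hstr hE hult he₀ hi₀
  obtain ⟨γ₁, hγ₁, hc₁⟩ := hj.exists_auto_map_eq hstr hE hult he₁ hi₁
  have hall : TupleIn M ((K.tup G₀.j).map γ₀ ++ (K.tup G₁.j).map γ₁ ++ K.tup j) :=
    ((hγ₀.1.tupleIn_map ((K.tup_mem _).of_str hstr)).append
      (hγ₁.1.tupleIn_map ((K.tup_mem _).of_str hstr))).append ((K.tup_mem j).of_str hstr)
  obtain ⟨js, -, hjs⟩ := hdense _ hall 0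
  refine ⟨js, _, _, K.tup j, hc₀ ▸ spanCert_of_auto hstr hG₀ hγ₀ ?_,
    hc₁ ▸ spanCert_of_auto hstr hG₁ hγ₁ ?_⟩ <;>
    refine tupleIn_str_of_subset hstr hjs hall fun x hx => ?_ <;>
    simp only [List.map_append, hc₀, hc₁, List.mem_append] at hx ⊢ <;> tauto

theorem exists_degenerateCert (hstr : ∀ i, K.str i = M.sub (K.tup i))
    (hdense : ∀ as : List ℕ, TupleIn M as → ∀ n : ℕ, ∃ i, n ≤ i ∧ K.tup i = as)
    (G₀ G₁ : PotEmb) : ∃ (js : ℕ) (ds₀ ds₁ : List ℕ), DegenerateCert K G₀ G₁ js ds₀ ds₁ := by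
  have hall := ((K.tup_mem G₀.j).of_str hstr).append ((K.tup_mem G₁.j).of_str hstr)
  obtain ⟨js, -, hjs⟩ := hdense _ hall 0
  have h₀ := tupleIn_str_of_subset hstr hjs hall (List.subset_append_left _ _)
  have h₁ := tupleIn_str_of_subset hstr hjs hall (List.subset_append_right _ _)
  exact ⟨js, _, _, encode_mem_embedInfo.2 ⟨K.tup_mem _, h₀,
    (clSim_str_iff hstr (K.tup_mem _) h₀).2 (.refl _ _)⟩,
    encode_mem_embedInfo.2 ⟨h₁, h₁, .refl _ _⟩, rfl⟩

theorem exists_amalgCert (hstr : ∀ i, K.str i = M.sub (K.tup i))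
    (hdense : ∀ as : List ℕ, TupleIn M as → ∀ n : ℕ, ∃ i, n ≤ i ∧ K.tup i = as)
    (hE : IsCofinalCollection M E) (hult : CofUltraFor M E) (hF : F ∈ cofinalEmbeddings K E)
    (hG₀ : G₀.Valid K) (hG₁ : G₁.Valid K) (hi₀ : G₀.i = F.j) (hi₁ : G₁.i = F.j) :
    ∃ (js : ℕ) (ds₀ ds₁ es : List ℕ), AmalgCert K G₀ G₁ js ds₀ ds₁ es := by
  by_cases ht : G₀.EmbTest K ∧ G₁.EmbTest K
  · obtain ⟨js, ds₀, ds₁, es, h₀, h₁⟩ := exists_spanCert hstr hdense hE hult hF.2.2 hG₀ hG₁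
      (PotEmb.embTest_iff.1 ht.1).2 (PotEmb.embTest_iff.1 ht.2).2 hi₀ hi₁
    exact ⟨js, ds₀, ds₁, es, .inl ⟨ht, h₀, h₁⟩⟩
  · obtain ⟨js, ds₀, ds₁, h⟩ := exists_degenerateCert hstr hdense G₀ G₁
    exact ⟨js, ds₀, ds₁, [], .inr ⟨ht, h⟩⟩

end Certificates

section OracleComputability

variable {s : Set ℕ}

def OCode.ofCode : Nat.Partrec.Code → OCode
  | .zero => .zero
  | .succ => .succ
  | .left => .left
  | .right => .right
  | .pair a b => .pair (ofCode a) (ofCode b)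
  | .comp a b => .comp (ofCode a) (ofCode b)
  | .prec a b => .prec (ofCode a) (ofCode b)
  | .rfind' a => .rfind' (ofCode a)

theorem OCode.eval_ofCode (O : ℕ →. ℕ) (c : Nat.Partrec.Code) :
    (OCode.ofCode c).eval O = c.eval := by
  induction c with
  | zero | succ | left | right => rfl
  | pair a b iha ihb | comp a b iha ihb | prec a b iha ihb =>
      simp only [ofCode, OCode.eval, Nat.Partrec.Code.eval, iha, ihb]; rfl
  | rfind' a iha => simp only [ofCode, OCode.eval, Nat.Partrec.Code.eval, iha]; rfl

theorem OCode.eval_pair {O : ℕ →. ℕ} {c₁ c₂ : OCode} {p a b : ℕ}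
    (h₁ : c₁.eval O p = Part.some a) (h₂ : c₂.eval O p = Part.some b) :
    (OCode.pair c₁ c₂).eval O p = Part.some (Nat.pair a b) := by
  simp [OCode.eval, h₁, h₂, Seq.seq]

theorem OCode.eval_comp {O : ℕ →. ℕ} {c₁ c₂ : OCode} {p a : ℕ}
    (h₂ : c₂.eval O p = Part.some a) : (OCode.comp c₁ c₂).eval O p = c₁.eval O a := by
  show c₂.eval O p >>= c₁.eval O = _
  rw [h₂]
  exact Part.bind_some _ _

namespace TotalComputableIn

variable {f g : ℕ → ℕ}

theorem of_computable (hf : Computable f) : TotalComputableIn s f := by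
  obtain ⟨c, hc⟩ := Nat.Partrec.Code.exists_code.1 (Partrec.nat_iff.1 hf)
  exact ⟨OCode.ofCode c, fun n => by rw [OCode.eval_ofCode, hc]; rfl⟩

theorem comp (hf : TotalComputableIn s f) (hg : TotalComputableIn s g) :
    TotalComputableIn s fun n => f (g n) := by
  obtain ⟨cf, hcf⟩ := hf
  obtain ⟨cg, hcg⟩ := hg
  exact ⟨.comp cf cg, fun n => by rw [OCode.eval_comp (hcg n), hcf]⟩

theorem pair (hf : TotalComputableIn s f) (hg : TotalComputableIn s g) :
    TotalComputableIn s fun n => Nat.pair (f n) (g n) := by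
  obtain ⟨cf, hcf⟩ := hf
  obtain ⟨cg, hcg⟩ := hg
  exact ⟨.pair cf cg, fun n => OCode.eval_pair (hcf n) (hcg n)⟩

theorem comp₂ {h : ℕ → ℕ → ℕ} (hh : Computable₂ h) (hf : TotalComputableIn s f)
    (hg : TotalComputableIn s g) : TotalComputableIn s fun n => h (f n) (g n) := by
  have hh' : Computable fun m : ℕ => h m.unpair.1 m.unpair.2 :=
    hh.comp (Computable.fst.comp Computable.unpair) (Computable.snd.comp Computable.unpair)
  simpa only [Nat.unpair_pair] using (of_computable hh').comp (hf.pair hg)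

theorem exists_rfind (hf : TotalComputableIn s f) :
    ∃ c : OCode, ∀ p, c.eval (chi s) p =
      Nat.rfind fun n => Part.some (decide (f (Nat.pair p n) = 0)) := by
  obtain ⟨cf, hcf⟩ := hf
  obtain ⟨cid, hcid⟩ := of_computable (s := s) Computable.id
  refine ⟨.comp (.rfind' cf) (.pair cid .zero), fun p => ?_⟩
  rw [OCode.eval_comp (OCode.eval_pair (hcid p) rfl)]
  have hcf' : ∀ n, cf.eval (chi s) n = Part.some (f n) := hcf
  simp only [OCode.eval, Nat.unpaired, Nat.unpair_pair, Nat.add_zero, hcf']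
  exact Part.map_id' (fun _ => rfl) _

theorem exists_search (hf : TotalComputableIn s f) (hg : TotalComputableIn s g) :
    ∃ c : OCode, ∀ p n₀, f (Nat.pair p n₀) = 0 →
      ∃ n, f (Nat.pair p n) = 0 ∧ c.eval (chi s) p = Part.some (g (Nat.pair p n)) := by
  obtain ⟨cr, hcr⟩ := hf.exists_rfind
  obtain ⟨cg, hcg⟩ := hg
  obtain ⟨cid, hcid⟩ := of_computable (s := s) Computable.id
  refine ⟨.comp cg (.pair cid cr), fun p n₀ h₀ => ?_⟩
  have hdom : (Nat.rfind fun n => Part.some (decide (f (Nat.pair p n) = 0))).Dom :=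
    Nat.rfind_dom.2 ⟨n₀, by simpa using h₀, fun _ => trivial⟩
  have hmem := Part.get_mem hdom
  refine ⟨_, by simpa using Nat.rfind_spec hmem, ?_⟩
  rw [OCode.eval_comp (OCode.eval_pair (hcid p) ((hcr p).trans (Part.eq_some_iff.2 hmem))),
    hcg]
  rfl

theorem exists_semidecide (hf : TotalComputableIn s f) :
    ∃ c : OCode, ∀ p, (c.eval (chi s) p).Dom ↔ ∃ n, f (Nat.pair p n) = 0 := by
  obtain ⟨c, hc⟩ := hf.exists_rfind
  refine ⟨c, fun p => (hc p ▸ Nat.rfind_dom).trans ?_⟩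
  simp

end TotalComputableIn

theorem SetRecIn.totalComputableIn {A : Set ℕ} (h : SetRecIn s A) :
    TotalComputableIn s fun n => if n ∈ A then 1 else 0 := by
  obtain ⟨c, hc⟩ := h
  exact ⟨c, fun n => by rw [hc]; rfl⟩

end OracleComputability

section RelativeComputability

variable {s : Set ℕ} {α β γ : Type*} [Primcodable α] [Primcodable β] [Primcodable γ]

def RelComputable (s : Set ℕ) (f : α → β) : Prop :=
  ∃ g : ℕ → ℕ, TotalComputableIn s g ∧ ∀ a, g (encode a) = encode (f a)

def RelDecidable (s : Set ℕ) (P : α → Prop) : Prop :=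
  ∃ g : ℕ → ℕ, TotalComputableIn s g ∧ ∀ a, g (encode a) = 0 ↔ P a

theorem RelComputable.of_computable {f : α → β} (hf : Computable f) : RelComputable s f := by
  refine ⟨fun n => (encode ((decode (α := α) n).map f)).pred,
    .of_computable (Computable.pred.comp (Computable.encode.comp
      (Computable.option_map Computable.decode (hf.comp Computable.snd).to₂))), fun a => ?_⟩
  simp [encodek]

theorem RelComputable.comp {g : β → γ} {f : α → β} (hg : RelComputable s g)
    (hf : RelComputable s f) : RelComputable s fun a => g (f a) := by
  obtain ⟨g', hg', hg⟩ := hg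
  obtain ⟨f', hf', hf⟩ := hf
  exact ⟨_, hg'.comp hf', fun a => by rw [hf, hg]⟩

theorem RelComputable.pair {f : α → β} {g : α → γ} (hf : RelComputable s f)
    (hg : RelComputable s g) : RelComputable s fun a => (f a, g a) := by
  obtain ⟨f', hf', hf⟩ := hf
  obtain ⟨g', hg', hg⟩ := hg
  exact ⟨_, hf'.pair hg', fun a => by rw [hf, hg]; rfl⟩

theorem RelComputable.comp₂ {δ : Type*} [Primcodable δ] {h : β → γ → δ} (hh : Computable₂ h)
    {f : α → β} {g : α → γ} (hf : RelComputable s f) (hg : RelComputable s g) :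
    RelComputable s fun a => h (f a) (g a) :=
  (RelComputable.of_computable hh).comp (hf.pair hg)

theorem RelDecidable.comp {P : β → Prop} {f : α → β} (hP : RelDecidable s P)
    (hf : RelComputable s f) : RelDecidable s fun a => P (f a) := by
  obtain ⟨p, hp, hP⟩ := hP
  obtain ⟨f', hf', hf⟩ := hf
  exact ⟨_, hp.comp hf', fun a => by rw [hf, hP]⟩

theorem RelDecidable.and {P Q : α → Prop} (hP : RelDecidable s P) (hQ : RelDecidable s Q) :
    RelDecidable s fun a => P a ∧ Q a := by
  obtain ⟨p, hp, hP⟩ := hP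
  obtain ⟨q, hq, hQ⟩ := hQ
  exact ⟨_, .comp₂ Primrec.nat_add.to_comp hp hq, fun a => by rw [Nat.add_eq_zero_iff, hP, hQ]⟩

theorem RelDecidable.or {P Q : α → Prop} (hP : RelDecidable s P) (hQ : RelDecidable s Q) :
    RelDecidable s fun a => P a ∨ Q a := by
  obtain ⟨p, hp, hP⟩ := hP
  obtain ⟨q, hq, hQ⟩ := hQ
  exact ⟨_, .comp₂ Primrec.nat_mul.to_comp hp hq, fun a => by rw [Nat.mul_eq_zero, hP, hQ]⟩

theorem RelDecidable.not {P : α → Prop} (hP : RelDecidable s P) :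
    RelDecidable s fun a => ¬P a := by
  obtain ⟨p, hp, hP⟩ := hP
  have hneg : Computable fun n : ℕ => if n = 0 then 1 else 0 :=
    (Primrec.ite (Primrec.eq.comp Primrec.id (Primrec.const 0)) (Primrec.const 1)
      (Primrec.const 0)).to_comp
  exact ⟨_, (TotalComputableIn.of_computable hneg).comp hp, fun a => by simp [← hP]⟩

theorem RelDecidable.eq {f g : α → β} (hf : RelComputable s f) (hg : RelComputable s g) :
    RelDecidable s fun a => f a = g a := by
  obtain ⟨f', hf', hf⟩ := hf
  obtain ⟨g', hg', hg⟩ := hg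
  have hdist : Computable₂ fun m n : ℕ => if m = n then 0 else 1 :=
    (Primrec.ite Primrec.eq (Primrec.const 0) (Primrec.const 1)).to_comp
  exact ⟨_, .comp₂ hdist hf' hg', fun a => by simp [hf, hg, encode_inj]⟩

theorem SetRecIn.relDecidable {A : Set ℕ} (h : SetRecIn s A) :
    RelDecidable s fun a : α => encode a ∈ A := by
  have hneg : Computable fun n : ℕ => if n = 1 then 0 else 1 :=
    (Primrec.ite (Primrec.eq.comp Primrec.id (Primrec.const 1)) (Primrec.const 0)
      (Primrec.const 1)).to_comp
  exact ⟨_, (TotalComputableIn.of_computable hneg).comp h.totalComputableIn,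
    fun a => by by_cases ha : encode a ∈ A <;> simp [ha]⟩

theorem RelDecidable.exists_search {P : α × β → Prop} (hP : RelDecidable s P)
    (hβ : Function.Surjective (encode : β → ℕ)) {out : α × β → γ} (hout : Computable out) :
    ∃ c : OCode, ∀ a, (∃ b, P (a, b)) →
      ∃ b, P (a, b) ∧ c.eval (chi s) (encode a) = Part.some (encode (out (a, b))) := by
  obtain ⟨p, hp, hP⟩ := hP
  obtain ⟨o, ho, hout⟩ := RelComputable.of_computable (s := s) hout
  obtain ⟨c, hc⟩ := hp.exists_search ho
  refine ⟨c, fun a ⟨b, hb⟩ => ?_⟩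
  obtain ⟨n, hn, heval⟩ := hc (encode a) (encode b) ((hP (a, b)).2 hb)
  obtain ⟨b', rfl⟩ := hβ n
  exact ⟨b', (hP _).1 hn, by rwa [← hout]⟩

theorem RelDecidable.cEIn {P : α × β → Prop} (hP : RelDecidable s P)
    (hα : Function.Surjective (encode : α → ℕ)) (hβ : Function.Surjective (encode : β → ℕ)) :
    CEIn s {n | ∃ a b, P (a, b) ∧ n = encode a} := by
  obtain ⟨p, hp, hP⟩ := hP
  obtain ⟨c, hc⟩ := hp.exists_semidecide
  refine ⟨c, fun n => ?_⟩
  obtain ⟨a, rfl⟩ := hα n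
  rw [hc, hβ.exists]
  exact ⟨fun ⟨a', b, hab, ha⟩ => ⟨b, (hP (a, b)).2 (encode_injective ha ▸ hab)⟩,
    fun ⟨b, hb⟩ => ⟨a, b, (hP (a, b)).1 hb, rfl⟩⟩

end RelativeComputability

def PotEmb.equivTriple : PotEmb ≃ ℕ × ℕ × List ℕ where
  toFun F := (F.i, F.j, F.c)
  invFun x := ⟨x.1, x.2.1, x.2.2⟩

instance : Primcodable PotEmb := Primcodable.ofEquiv _ PotEmb.equivTriple

theorem PotEmb.primrec_i : Primrec PotEmb.i :=
  Primrec.fst.comp (Primrec.of_equiv (e := PotEmb.equivTriple))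

theorem PotEmb.primrec_j : Primrec PotEmb.j :=
  Primrec.fst.comp (Primrec.snd.comp (Primrec.of_equiv (e := PotEmb.equivTriple)))

theorem PotEmb.primrec_c : Primrec PotEmb.c :=
  Primrec.snd.comp (Primrec.snd.comp (Primrec.of_equiv (e := PotEmb.equivTriple)))

theorem PotEmb.primrec_mk : Primrec fun x : ℕ × ℕ × List ℕ => PotEmb.mk x.1 x.2.1 x.2.2 :=
  Primrec.of_equiv_symm (e := PotEmb.equivTriple)

theorem PotEmb.encode_surjective : Function.Surjective (encode : PotEmb → ℕ) :=
  fun n => ⟨PotEmb.equivTriple.symm (Denumerable.ofNat _ n),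
    (congrArg encode (PotEmb.equivTriple.apply_symm_apply _)).trans
      (Denumerable.encode_ofNat n)⟩

section DecidingCertificates

variable {s : Set ℕ} {K : CompAge L} {E : Set (List ℕ)}

theorem relDecidable_embTest (hEI : SetRecIn s (EmbedInfo K)) (htup : RelComputable s K.tup) :
    RelDecidable s (PotEmb.EmbTest K) :=
  hEI.relDecidable.comp <| (RelComputable.of_computable PotEmb.primrec_i.to_comp).pair <|
    (htup.comp (.of_computable PotEmb.primrec_i.to_comp)).pair <|
      .of_computable (PotEmb.primrec_j.pair PotEmb.primrec_c).to_comp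

theorem relDecidable_mem_cofinalEmbeddings_cert (hEI : SetRecIn s (EmbedInfo K))
    (hE : SetRecIn s (ECodes E)) (htup : RelComputable s K.tup) :
    RelDecidable s fun x : PotEmb × List ℕ => x.1.EmbTest K ∧
      encode (x.1.j, x.2, x.1.j, x.2) ∈ EmbedInfo K ∧ encode (K.tup x.1.j ++ x.2) ∈ ECodes E := by
  have hj : Primrec fun x : PotEmb × List ℕ => x.1.j := PotEmb.primrec_j.comp Primrec.fst
  refine ((relDecidable_embTest hEI htup).comp (.of_computable Computable.fst)).and
    ((hEI.relDecidable.comp (.of_computable ?_)).and (hE.relDecidable.comp ?_))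
  · exact (hj.pair (Primrec.snd.pair (hj.pair Primrec.snd))).to_comp
  · exact RelComputable.comp₂ Primrec.list_append.to_comp
      (htup.comp (.of_computable hj.to_comp)) (.of_computable Computable.snd)

theorem relDecidable_spanCert (hEI : SetRecIn s (EmbedInfo K)) (htup : RelComputable s K.tup) :
    RelDecidable s fun y : PotEmb × ℕ × List ℕ × List ℕ =>
      SpanCert K y.1 y.2.1 y.2.2.1 y.2.2.2 := by
  have hj : RelComputable s fun y : PotEmb × ℕ × List ℕ × List ℕ => y.1.j :=
    .of_computable (PotEmb.primrec_j.comp Primrec.fst).to_comp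
  have hds : Primrec fun y : PotEmb × ℕ × List ℕ × List ℕ => y.2.2.1 :=
    Primrec.fst.comp (Primrec.snd.comp Primrec.snd)
  refine (hEI.relDecidable.comp (hj.pair (.pair ?_ (.of_computable ?_)))).and
    (.eq (.of_computable (Primrec.list_length.comp hds).to_comp)
      (.comp (.of_computable Primrec.list_length.to_comp) (htup.comp hj)))
  · exact .comp₂ Primrec.list_append.to_comp (htup.comp hj)
      (.of_computable (PotEmb.primrec_c.comp Primrec.fst).to_comp)
  · exact ((Primrec.fst.comp Primrec.snd).pair (Primrec.list_append.comp hds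
      (Primrec.snd.comp (Primrec.snd.comp Primrec.snd)))).to_comp

theorem relDecidable_degenerateCert (hEI : SetRecIn s (EmbedInfo K))
    (htup : RelComputable s K.tup) :
    RelDecidable s fun z : PotEmb × PotEmb × ℕ × List ℕ × List ℕ =>
      DegenerateCert K z.1 z.2.1 z.2.2.1 z.2.2.2.1 z.2.2.2.2 := by
  have hj₀ : RelComputable s fun z : PotEmb × PotEmb × ℕ × List ℕ × List ℕ => z.1.j :=
    .of_computable (PotEmb.primrec_j.comp Primrec.fst).to_comp
  have hj₁ : RelComputable s fun z : PotEmb × PotEmb × ℕ × List ℕ × List ℕ => z.2.1.j :=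
    .of_computable (PotEmb.primrec_j.comp (Primrec.fst.comp Primrec.snd)).to_comp
  have hjs : Primrec fun z : PotEmb × PotEmb × ℕ × List ℕ × List ℕ => z.2.2.1 :=
    Primrec.fst.comp (Primrec.snd.comp Primrec.snd)
  have hds₀ : Primrec fun z : PotEmb × PotEmb × ℕ × List ℕ × List ℕ => z.2.2.2.1 :=
    Primrec.fst.comp (Primrec.snd.comp (Primrec.snd.comp Primrec.snd))
  have hds₁ : Primrec fun z : PotEmb × PotEmb × ℕ × List ℕ × List ℕ => z.2.2.2.2 :=
    Primrec.snd.comp (Primrec.snd.comp (Primrec.snd.comp Primrec.snd))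
  exact (hEI.relDecidable.comp (hj₀.pair ((htup.comp hj₀).pair
    (.of_computable (hjs.pair hds₀).to_comp)))).and
    ((hEI.relDecidable.comp (.of_computable (hjs.pair (hds₁.pair (hjs.pair hds₁))).to_comp)).and
      (.eq (.of_computable (Primrec.list_length.comp hds₁).to_comp)
        (.comp (.of_computable Primrec.list_length.to_comp) (htup.comp hj₁))))

theorem relDecidable_amalgCert (hEI : SetRecIn s (EmbedInfo K)) (htup : RelComputable s K.tup) :
    RelDecidable s fun x : (PotEmb × PotEmb × PotEmb) × (ℕ × List ℕ × List ℕ × List ℕ) =>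
      AmalgCert K x.1.2.1 x.1.2.2 x.2.1 x.2.2.1 x.2.2.2.1 x.2.2.2.2 := by
  have hG₀ : Primrec fun x : (PotEmb × PotEmb × PotEmb) × (ℕ × List ℕ × List ℕ × List ℕ) =>
      x.1.2.1 := Primrec.fst.comp (Primrec.snd.comp Primrec.fst)
  have hG₁ : Primrec fun x : (PotEmb × PotEmb × PotEmb) × (ℕ × List ℕ × List ℕ × List ℕ) =>
      x.1.2.2 := Primrec.snd.comp (Primrec.snd.comp Primrec.fst)
  have hjs : Primrec fun x : (PotEmb × PotEmb × PotEmb) × (ℕ × List ℕ × List ℕ × List ℕ) =>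
      x.2.1 := Primrec.fst.comp Primrec.snd
  have hds₀ : Primrec fun x : (PotEmb × PotEmb × PotEmb) × (ℕ × List ℕ × List ℕ × List ℕ) =>
      x.2.2.1 := Primrec.fst.comp (Primrec.snd.comp Primrec.snd)
  have hds₁ : Primrec fun x : (PotEmb × PotEmb × PotEmb) × (ℕ × List ℕ × List ℕ × List ℕ) =>
      x.2.2.2.1 := Primrec.fst.comp (Primrec.snd.comp (Primrec.snd.comp Primrec.snd))
  have hes : Primrec fun x : (PotEmb × PotEmb × PotEmb) × (ℕ × List ℕ × List ℕ × List ℕ) =>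
      x.2.2.2.2 := Primrec.snd.comp (Primrec.snd.comp (Primrec.snd.comp Primrec.snd))
  have htest := ((relDecidable_embTest hEI htup).comp (.of_computable hG₀.to_comp)).and
    ((relDecidable_embTest hEI htup).comp (.of_computable hG₁.to_comp))
  have hspan := relDecidable_spanCert hEI htup
  exact (htest.and
    ((hspan.comp (.of_computable (hG₀.pair (hjs.pair (hds₀.pair hes))).to_comp)).and
      (hspan.comp (.of_computable (hG₁.pair (hjs.pair (hds₁.pair hes))).to_comp)))).or
    (htest.not.and ((relDecidable_degenerateCert hEI htup).comp
      (.of_computable (hG₀.pair (hG₁.pair (hjs.pair (hds₀.pair hds₁)))).to_comp)))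

theorem cEIn_codes_cofinalEmbeddings (hEI : SetRecIn s (EmbedInfo K))
    (hE : SetRecIn s (ECodes E)) (htup : RelComputable s K.tup) :
    CEIn s {p | ∃ F ∈ cofinalEmbeddings K E, p = F.code} := by
  convert (relDecidable_mem_cofinalEmbeddings_cert hEI hE htup).cEIn PotEmb.encode_surjective
    fun n => ⟨Denumerable.ofNat (List ℕ) n, Denumerable.encode_ofNat n⟩ using 1
  ext n
  exact ⟨fun ⟨F, hF, hn⟩ => (mem_cofinalEmbeddings_iff.1 hF).elim fun cs h => ⟨F, cs, h, hn⟩,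
    fun ⟨F, cs, h, hn⟩ => ⟨F, mem_cofinalEmbeddings_iff.2 ⟨cs, h⟩, hn⟩⟩

theorem computable_amalgOutput :
    Computable fun x : (PotEmb × PotEmb × PotEmb) × (ℕ × List ℕ × List ℕ × List ℕ) =>
      ((⟨x.1.2.1.j, x.2.1, x.2.2.1⟩ : PotEmb), (⟨x.1.2.2.j, x.2.1, x.2.2.2.1⟩ : PotEmb)) := by
  have hjs : Primrec fun x : (PotEmb × PotEmb × PotEmb) × (ℕ × List ℕ × List ℕ × List ℕ) =>
      x.2.1 := Primrec.fst.comp Primrec.snd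
  refine (PotEmb.primrec_mk.comp ((PotEmb.primrec_j.comp (Primrec.fst.comp (Primrec.snd.comp
    Primrec.fst))).pair (hjs.pair (Primrec.fst.comp (Primrec.snd.comp Primrec.snd))))).pair
    (PotEmb.primrec_mk.comp ((PotEmb.primrec_j.comp (Primrec.snd.comp (Primrec.snd.comp
    Primrec.fst))).pair (hjs.pair (Primrec.fst.comp (Primrec.snd.comp (Primrec.snd.comp
    Primrec.snd)))))) |>.to_comp

end DecidingCertificates

theorem comp_cofultra_implies_CcoAP_general {L : Lang} (s : Set ℕ) (M : Str L)
    (hu : CompCofUltrahom s M) :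
    ∀ K : CompAge L, IsCanonicalAgeOf s K M →
      TuringLE (EmbedInfo K) s → CcoAP s K := by
  rintro K ⟨htup, -, hdense, hstr⟩ hEI
  obtain ⟨E, hE, hErec, hcu⟩ := hu
  have hult := hcu.cofUltraFor hE
  have htup' : RelComputable s K.tup := ⟨_, htup, fun _ => rfl⟩
  refine ⟨cofinalEmbeddings K E, isCoAPFamily_cofinalEmbeddings hstr hdense hE hult,
    cEIn_codes_cofinalEmbeddings hEI hErec htup', ?_⟩
  obtain ⟨c, hc⟩ := (relDecidable_amalgCert hEI htup').exists_search
    (fun n => ⟨Denumerable.ofNat _ n, Denumerable.encode_ofNat n⟩) computable_amalgOutput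
  refine ⟨c, fun F hF G₀ G₁ hG₀ hG₁ hi₀ hi₁ => ?_⟩
  obtain ⟨js, ds₀, ds₁, es, hcert⟩ := exists_amalgCert hstr hdense hE hult hF hG₀ hG₁ hi₀ hi₁
  obtain ⟨_, hw, heval⟩ := hc (F, G₀, G₁) ⟨(js, ds₀, ds₁, es), hcert⟩
  exact ⟨_, _, heval, amalgDiagOver_of_amalgCert hG₀ hG₁ hw⟩

/-- If `M` is an `s`-computable structure that is `s`-computably
cofinally ultrahomogeneous and `EmbedInfo(M) ≤_T s`, then the canonical age of `M` has
`CcoAP(s)`. -/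
theorem comp_cofultra_implies_CcoAP {L : Lang} (hL : L.ComputableRep)
    (s : Set ℕ) (M : Str L)
    (hM : StrComputableIn s M) (hu : CompCofUltrahom s M) :
    ∀ K : CompAge L, IsCanonicalAgeOf s K M →
      TuringLE (EmbedInfo K) s → CcoAP s K :=
  comp_cofultra_implies_CcoAP_general s M hu

end CFL
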